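/- Let p ∈ D[X] be monic non-constant and K ⊆ F an algebraic field extension, with D_F the integral closure of D in F. Then D(p) = D[X] + p·K[X] ⊆ D_F(p) = D_F[X] + p·F[X] is an integral ring extension. -/

import Mathlib

open Polynomial

variable (D : Type*) [CommRing D] [IsDomain D]

noncomputable abbrev K := FractionRing D

/-- The pullback `D(p) = D[X] + p·K[X]` as a subring of `K[X]`. -/
noncomputable def Dp (p : D[X]) : Subring (Polynomial (K D)) where
  carrier := {f | ∃ r : D[X], ∃ q : Polynomial (K D),
    f = r.map (algebraMap D (K D)) + p.map (algebraMap D (K D)) * q}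
  zero_mem' := ⟨0, 0, by simp⟩
  one_mem' := ⟨1, 0, by simp⟩
  add_mem' := by
    rintro a b ⟨r1, q1, rfl⟩ ⟨r2, q2, rfl⟩
    exact ⟨r1 + r2, q1 + q2, by push_cast [Polynomial.map_add]; ring⟩
  mul_mem' := by
    rintro a b ⟨r1, q1, rfl⟩ ⟨r2, q2, rfl⟩
    exact ⟨r1 * r2, r1.map (algebraMap D (K D)) * q2 + q1 * (r2.map (algebraMap D (K D)))
      + p.map (algebraMap D (K D)) * q1 * q2, by push_cast [Polynomial.map_mul]; ring⟩
  neg_mem' := by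
    rintro a ⟨r, q, rfl⟩
    exact ⟨-r, -q, by push_cast [Polynomial.map_neg]; ring⟩

/-! `D(p)` contains `X` and the constants `D`, so `X` and every element of `D_F` are integral
over it. The remaining generators `p·c` (`c ∈ F`) of `D_F(p)` are integral because `c` satisfies a
monic equation over `K`, and scaling its roots by `p` gives a monic equation whose lower
coefficients lie in `p·K[X] ⊆ D(p)`. -/

theorem isIntegral_of_monic_of_mem_lifts {R S : Type*} [CommRing R] [Ring S] [Algebra R S]
    {P : S[X]} (hP : P ∈ lifts (algebraMap R S)) (hPm : P.Monic) {x : S} (hx : P.eval x = 0) :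
    IsIntegral R x := by
  obtain ⟨Q, rfl, -, hQ⟩ := lifts_and_natDegree_eq_and_monic hP hPm
  exact ⟨Q, hQ, by rwa [eval_map] at hx⟩

/- Scaling the roots of a monic `g` over `A` by `t` gives a monic polynomial whose lower
coefficients `t ^ (n - i) * gᵢ` all contain a factor `t * gᵢ`. -/
theorem IsIntegral.algebraMap_mul_of_forall_mul_mem_range {R A S : Type*} [CommRing R]
    [CommRing A] [CommRing S] [Algebra R S] [Algebra A S] {t : R}
    (ht : ∀ k : A, algebraMap R S t * algebraMap A S k ∈ (algebraMap R S).range)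
    {x : S} (hx : IsIntegral A x) : IsIntegral R (algebraMap R S t * x) := by
  obtain ⟨g, hg, hgx⟩ := hx
  set s := algebraMap R S t
  set P := g.map (algebraMap A S)
  refine isIntegral_of_monic_of_mem_lifts (P := P.scaleRoots s) ?_
    ((monic_scaleRoots_iff s).2 (hg.map _)) ?_
  · refine (lifts_iff_coeff_lifts _).2 fun i => ?_
    change _ ∈ (algebraMap R S).range
    rw [coeff_scaleRoots]
    rcases lt_or_ge i P.natDegree with hi | hi
    · obtain ⟨m, hm⟩ := Nat.exists_eq_add_of_lt hi
      rw [hm, show i + m + 1 - i = m + 1 by omega, pow_succ', ← mul_assoc, coeff_map, mul_comm _ s]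
      exact mul_mem (ht _) (pow_mem (RingHom.mem_range_self _ t) m)
    · rw [Nat.sub_eq_zero_of_le hi, pow_zero, mul_one]
      rcases hi.eq_or_lt with h | h
      · rw [← h, (hg.map _).coeff_natDegree]
        exact one_mem _
      · rw [coeff_eq_zero_of_natDegree_lt h]
        exact zero_mem _
  · rw [scaleRoots_eval_mul, eval_map, hgx, mul_zero]

namespace Polynomial

variable {S : Type*} [Semiring S] (M : Subsemiring S[X]) {s : Set S}

theorem mul_mem_of_forall_coeff_mem {t : S[X]} (hX : X ∈ M) (ht : ∀ c ∈ s, t * C c ∈ M)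
    {q : S[X]} (hq : ∀ n, q.coeff n ∈ s) : t * q ∈ M := by
  rw [q.as_sum_support_C_mul_X_pow, Finset.mul_sum]
  exact sum_mem fun n _ => by
    rw [← mul_assoc]
    exact mul_mem (ht _ (hq n)) (pow_mem hX n)

theorem mem_of_forall_coeff_mem (hX : X ∈ M) (hC : ∀ c ∈ s, C c ∈ M) {q : S[X]}
    (hq : ∀ n, q.coeff n ∈ s) : q ∈ M := by
  simpa using mul_mem_of_forall_coeff_mem M (t := 1) hX (by simpa using hC) hq

end Polynomial

namespace Dp

variable {R : Type*} [CommRing R] (p : R[X])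

theorem X_mem : (X : (K R)[X]) ∈ Dp R p := ⟨X, 0, by simp⟩

theorem map_mul_mem (q : (K R)[X]) : p.map (algebraMap R (K R)) * q ∈ Dp R p := ⟨0, q, by simp⟩

noncomputable def const : R →+* Dp R p :=
  (algebraMap R (K R)[X]).codRestrict (Dp R p) fun d => ⟨C d, 0, by simp⟩

@[simp]
theorem coe_const (d : R) : (const p d : (K R)[X]) = C (algebraMap R (K R) d) := rfl

end Dp

theorem Dp_integral_over_Dp (F : Type*) [Field F] [Algebra D F] [Algebra (K D) F]
    [IsScalarTower D (K D) F] [Algebra.IsAlgebraic (K D) F]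
    (p : D[X]) :
    ∀ f : Polynomial F,
      (∃ r : Polynomial (↥(integralClosure D F)), ∃ q : Polynomial F,
        f = r.map (algebraMap (↥(integralClosure D F)) F) + p.map (algebraMap D F) * q) →
      ((Polynomial.mapRingHom (algebraMap (K D) F)).comp (Dp D p).subtype).IsIntegralElem f := by
  let _ : Algebra (Dp D p) F[X] :=
    ((mapRingHom (algebraMap (K D) F)).comp (Dp D p).subtype).toAlgebra
  let M := (integralClosure (Dp D p) F[X]).toSubsemiring
  have hX : X ∈ M := by
    have hX' : algebraMap (Dp D p) F[X] ⟨X, Dp.X_mem p⟩ = X := by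
      simp [RingHom.algebraMap_toAlgebra]
    exact hX' ▸ isIntegral_algebraMap
  have hC : ∀ a ∈ (integralClosure D F : Set F), C a ∈ M := fun a ha => by
    refine IsIntegral.map_of_comp_eq (Dp.const p) C ?_ ha
    ext d : 1
    simp [RingHom.algebraMap_toAlgebra, IsScalarTower.algebraMap_apply D (K D) F]
  have hp : p.map (algebraMap D F) = algebraMap (Dp D p) F[X] ⟨_, Dp.map_mul_mem p 1⟩ := by
    simp [RingHom.algebraMap_toAlgebra, map_map, ← IsScalarTower.algebraMap_eq]
  have hpC : ∀ c ∈ (Set.univ : Set F), p.map (algebraMap D F) * C c ∈ M := fun c _ => by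
    rw [hp]
    refine IsIntegral.algebraMap_mul_of_forall_mul_mem_range (A := K D) (fun k => ?_)
      ((Algebra.IsAlgebraic.isAlgebraic c).isIntegral.algebraMap)
    exact ⟨⟨_, Dp.map_mul_mem p (C k)⟩, by simp [RingHom.algebraMap_toAlgebra]⟩
  rintro f ⟨r, q, rfl⟩
  refine add_mem (mem_of_forall_coeff_mem M hX hC fun n => ?_)
    (mul_mem_of_forall_coeff_mem M hX hpC fun _ => Set.mem_univ _)
  rw [coeff_map]
  exact (r.coeff n).2
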